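/- Let B be a skew brace such that B³ = 0, and let Z_n(B²,+) denote the n-th term of the upper central series of the additive group (B²,+). Then Z_n(B²,+) is an ideal of B for every n ≥ 0: it is a normal subgroup of (B,+), a normal subgroup of (B,·), and λ-invariant. -/

import Mathlib

/-- A (left) skew brace: a set with two group structures `(B,+)` and `(B,·)`
satisfying `a·(b+c) = a·b - a + a·c`. -/
class SkewBrace (B : Type*) extends AddGroup B, Group B where
  mul_add_compat : ∀ a b c : B, a * (b + c) = a * b - a + a * c

namespace SkewBrace

variable {B : Type*} [SkewBrace B]

/-- The star product `a ∗ b = -a + a·b - b`. -/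
def star (a b : B) : B := -a + a * b - b

/-- For subsets `X, Y ⊆ B`, `X ∗ Y` is the additive subgroup generated by
all `x ∗ y` with `x ∈ X`, `y ∈ Y`. -/
def starSet (X Y : Set B) : AddSubgroup B :=
  AddSubgroup.closure (Set.image2 star X Y)

/-- The left series, indexed so that `leftSeries B n = B^{n+1}`:
`leftSeries B 0 = B¹ = B` and `leftSeries B (n+1) = B ∗ leftSeries B n`. -/
def leftSeries (B : Type*) [SkewBrace B] : ℕ → AddSubgroup B
  | 0 => ⊤
  | n + 1 => starSet Set.univ (leftSeries B n)

/-- The right series, indexed so that `rightSeries B n = B^{(n+1)}`: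
`rightSeries B 0 = B^{(1)} = B` and `rightSeries B (n+1) = (rightSeries B n) ∗ B`. -/
def rightSeries (B : Type*) [SkewBrace B] : ℕ → AddSubgroup B
  | 0 => ⊤
  | n + 1 => starSet (rightSeries B n : Set B) Set.univ

end SkewBrace

namespace SkewBrace

/-- The `n`-th term of the upper central series of the additive group `(B²,+)`,
viewed as a subset of `B`. -/
def upperCentralSet (B : Type*) [SkewBrace B] (n : ℕ) : Set B :=
  {x : B | ∃ hx : x ∈ leftSeries B 1,
    Multiplicative.ofAdd (⟨x, hx⟩ : ↥(leftSeries B 1)) ∈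
      upperCentralSeries (Multiplicative ↥(leftSeries B 1)) n}
end SkewBrace

/-!
When `B³ = 0`, every `x ∈ B²` satisfies `b ∗ x = 0`, i.e. `b · x = b + x`: multiplication by an
element of `B²` is addition, so `(B², +)` is also a subgroup of `(B, ·)` with the same group law,
and `λ` acts trivially on it. Both conjugation actions of `B` then restrict to additive
automorphisms of `(B², +)`, and the upper central series of a group is characteristic.
-/

namespace AddSubgroup

variable {G : Type*} [AddGroup G]

def addConjNormal (H : AddSubgroup G) [H.Normal] (g : G) : H ≃+ H where
  toFun x := ⟨g + x - g, by simpa [sub_eq_add_neg] using ‹H.Normal›.conj_mem x x.2 g⟩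
  invFun x := ⟨-g + x + g, by simpa using ‹H.Normal›.conj_mem x x.2 (-g)⟩
  left_inv x := by ext; simp [add_assoc]
  right_inv x := by ext; simp [add_assoc]
  map_add' x y := by ext; simp [sub_eq_add_neg, add_assoc]

end AddSubgroup

namespace SkewBrace

variable {B : Type*} [SkewBrace B]

theorem one_eq_zero : (1 : B) = 0 := by
  simpa using mul_add_compat (1 : B) 0 0

theorem star_mem_leftSeries_one (a b : B) : star a b ∈ leftSeries B 1 :=
  AddSubgroup.subset_closure ⟨a, trivial, b, trivial, rfl⟩

theorem add_star_sub (a b c : B) : b + star a c - b = -star a b + star a (b + c) := by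
  simp [star, mul_add_compat, sub_eq_add_neg, add_assoc]

instance leftSeries_one_normal : (leftSeries B 1).Normal where
  conj_mem x hx b := by
    let f : B →+ B := (Additive.toMul (AddAut.addConj b)).toAddMonoidHom
    suffices (leftSeries B 1).map f ≤ leftSeries B 1 from this ⟨x, hx, rfl⟩
    show (AddSubgroup.closure _).map f ≤ _
    rw [AddSubgroup.map_le_iff_le_comap, AddSubgroup.closure_le]
    rintro _ ⟨a, -, c, -, rfl⟩
    show b + star a c + -b ∈ leftSeries B 1
    rw [← sub_eq_add_neg, add_star_sub]
    exact add_mem (neg_mem (star_mem_leftSeries_one a b)) (star_mem_leftSeries_one a (b + c))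

theorem mul_sub_mem_leftSeries_one {x : B} (hx : x ∈ leftSeries B 1) (c : B) :
    x * c - c ∈ leftSeries B 1 := by
  simpa [star, sub_eq_add_neg, add_assoc] using add_mem hx (star_mem_leftSeries_one x c)

theorem apply_mem_upperCentralSet (φ : leftSeries B 1 ≃+ leftSeries B 1) {n : ℕ} {x : B}
    (hx : x ∈ upperCentralSet B n) : (φ ⟨x, hx.1⟩ : B) ∈ upperCentralSet B n := by
  have hxn : Multiplicative.ofAdd (⟨x, hx.1⟩ : leftSeries B 1) ∈
      Subgroup.upperCentralSeries _ n := hx.2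
  refine ⟨(φ ⟨x, hx.1⟩).2, ?_⟩
  change _ ∈ Subgroup.upperCentralSeries _ n
  rw [← Subgroup.comap_upperCentralSeries (AddEquiv.toMultiplicative φ.symm), Subgroup.mem_comap]
  simpa using hxn

def upperCentralAddSubgroup (B : Type*) [SkewBrace B] (n : ℕ) : AddSubgroup B where
  carrier := upperCentralSet B n
  zero_mem' := ⟨zero_mem _, one_mem _⟩
  add_mem' := fun ⟨hx, hx'⟩ ⟨hy, hy'⟩ => ⟨add_mem hx hy, mul_mem hx' hy'⟩
  neg_mem' := fun ⟨hx, hx'⟩ => ⟨neg_mem hx, inv_mem hx'⟩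

theorem star_eq_zero_of_mem (h3 : leftSeries B 2 = ⊥) {x : B} (hx : x ∈ leftSeries B 1) (b : B) :
    star b x = 0 := by
  have : star b x ∈ leftSeries B 2 := AddSubgroup.subset_closure ⟨b, trivial, x, hx, rfl⟩
  rwa [h3, AddSubgroup.mem_bot] at this

theorem mul_eq_add_of_mem (h3 : leftSeries B 2 = ⊥) {x : B} (hx : x ∈ leftSeries B 1) (b : B) :
    b * x = b + x := by
  have := star_eq_zero_of_mem h3 hx b
  rwa [star, sub_eq_zero, neg_add_eq_iff_eq_add] at this

theorem inv_eq_neg_of_mem (h3 : leftSeries B 2 = ⊥) {x : B} (hx : x ∈ leftSeries B 1) :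
    x⁻¹ = -x := by
  refine inv_eq_of_mul_eq_one_right ?_
  rw [mul_eq_add_of_mem h3 (neg_mem hx), add_neg_cancel, one_eq_zero]

theorem mul_conj_eq (h3 : leftSeries B 2 = ⊥) {x : B} (hx : x ∈ leftSeries B 1) (b : B) :
    b * x * b⁻¹ = b + (x * b⁻¹ - b⁻¹) - b :=
  calc b * x * b⁻¹ = b * ((x * b⁻¹ - b⁻¹) + b⁻¹) := by rw [mul_assoc, sub_add_cancel]
  _ = b * (x * b⁻¹ - b⁻¹) - b + b * b⁻¹ := mul_add_compat _ _ _
  _ = b + (x * b⁻¹ - b⁻¹) - b := by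
    rw [mul_eq_add_of_mem h3 (mul_sub_mem_leftSeries_one hx _), mul_inv_cancel, one_eq_zero,
      add_zero]

theorem mul_conj_mem_leftSeries_one (h3 : leftSeries B 2 = ⊥) {x : B} (hx : x ∈ leftSeries B 1)
    (b : B) :
    b * x * b⁻¹ ∈ leftSeries B 1 := by
  rw [mul_conj_eq h3 hx b]
  simpa [sub_eq_add_neg] using
    (leftSeries_one_normal (B := B)).conj_mem _ (mul_sub_mem_leftSeries_one hx b⁻¹) b

def mulConjLeftSeriesOne (h3 : leftSeries B 2 = ⊥) (b : B) :
    leftSeries B 1 ≃+ leftSeries B 1 where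
  toFun x := ⟨b * x * b⁻¹, mul_conj_mem_leftSeries_one h3 x.2 b⟩
  invFun x := ⟨b⁻¹ * x * b, by simpa using mul_conj_mem_leftSeries_one h3 x.2 b⁻¹⟩
  left_inv x := by ext; simp [mul_assoc]
  right_inv x := by ext; simp [mul_assoc]
  map_add' x y := by
    ext
    simp only [AddSubgroup.coe_add]
    rw [← mul_eq_add_of_mem h3 y.2 (x : B),
      ← mul_eq_add_of_mem h3 (mul_conj_mem_leftSeries_one h3 y.2 b) (b * x * b⁻¹)]
    group

def subgroupOfLeLeftSeriesOne (h3 : leftSeries B 2 = ⊥) (K : AddSubgroup B)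
    (hK : K ≤ leftSeries B 1) : Subgroup B where
  carrier := K
  one_mem' := one_eq_zero (B := B) ▸ K.zero_mem
  mul_mem' {x _} hx hy := mul_eq_add_of_mem h3 (hK hy) x ▸ K.add_mem hx hy
  inv_mem' hx := (inv_eq_neg_of_mem h3 (hK hx)).symm ▸ K.neg_mem hx

end SkewBrace

open SkewBrace in
/-- If `B³ = 0`, then `Z_n(B²,+)` is an ideal of `B`: it is a normal subgroup of `(B,+)`,
a normal subgroup of `(B,·)`, and `λ`-invariant. -/
theorem upperCentral_isIdeal (B : Type*) [SkewBrace B]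
    (h3 : leftSeries B 2 = ⊥) :
    ∀ n : ℕ, ∃ (Z : AddSubgroup B) (Z' : Subgroup B),
      (Z : Set B) = upperCentralSet B n ∧
      (Z' : Set B) = upperCentralSet B n ∧
      (∀ x ∈ Z, ∀ b : B, b + x - b ∈ Z) ∧
      (∀ x ∈ Z', ∀ b : B, b * x * b⁻¹ ∈ Z') ∧
      (∀ b : B, ∀ x ∈ Z, -b + b * x ∈ Z) := by
  intro n
  refine ⟨upperCentralAddSubgroup B n,
    subgroupOfLeLeftSeriesOne h3 (upperCentralAddSubgroup B n) fun _ hx => hx.1,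
    rfl, rfl, ?_, ?_, ?_⟩
  · intro x hx b
    exact apply_mem_upperCentralSet ((leftSeries B 1).addConjNormal b) hx
  · intro x hx b
    exact apply_mem_upperCentralSet (mulConjLeftSeriesOne h3 b) hx
  · intro b x hx
    rwa [mul_eq_add_of_mem h3 hx.1, neg_add_cancel_left]
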